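/- arXiv:1903.00929 — 14 statements merged into one kernel-verified Lean document; each statement's English description precedes it below -/
import Mathlib

section
/- Let (X, 𝓛) be a locally small space. Then 𝓛 = 𝓛ˢ ∩ 𝓛°, i.e., a subset of X is a smop if and only if it is both small and open. -/
open Set

/-- The family of sets compatible with a family `L`:
`L° = {Y : ∀ M ∈ L, Y ∩ M ∈ L}`. -/
def compatible {X : Type*} (L : Set (Set X)) : Set (Set X) :=
  {Y | ∀ M ∈ L, Y ∩ M ∈ L}

/-- The small sets: `Lˢ = {B : ∃ M ∈ L, B ⊆ M}`. -/
def smalls {X : Type*} (L : Set (Set X)) : Set (Set X) :=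
  {B | ∃ M ∈ L, B ⊆ M}

/-- The weakly open sets: `L^wo = {⋃₀ U : U ⊆ L}`. -/
def weaklyOpens {X : Type*} (L : Set (Set X)) : Set (Set X) :=
  {W | ∃ U ⊆ L, W = ⋃₀ U}

/-- `(X, L)` is a locally small space: `∅ ∈ L`, `L` is closed under binary
intersections and unions, and `L` covers `X`. -/
def IsLSS {X : Type*} (L : Set (Set X)) : Prop :=
  ∅ ∈ L ∧ (∀ a ∈ L, ∀ b ∈ L, a ∩ b ∈ L ∧ a ∪ b ∈ L) ∧ ⋃₀ L = Set.univ

/-- An admissible (locally essentially finite) open family. -/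
def Admissible {X : Type*} (L U : Set (Set X)) : Prop :=
  U ⊆ compatible L ∧
    ∀ M ∈ L, ∃ F ⊆ U, F.Finite ∧ (⋃₀ U) ∩ M = (⋃₀ F) ∩ M

theorem smops_eq_smalls_inter_opens {X : Type*} (L : Set (Set X)) (h : IsLSS L) :
    L = smalls L ∩ compatible L := by
  ext A
  constructor
  · intro hA
    exact ⟨⟨A, hA, subset_rfl⟩, fun M hM => (h.2.1 A hA M hM).1⟩
  · rintro ⟨⟨M, hM, hAM⟩, hc⟩
    have : A ∩ M = A := inter_eq_left.mpr hAM
    rw [← this]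
    exact hc M hM
end

section
/- For a locally small space (X, 𝓛), the following conditions are equivalent: (1) X ∈ 𝓛; (2) 𝓛ˢ = 𝒫(X); (3) 𝓛 = 𝓛°; (4) every admissible family is essentially finite; (5) every admissible family whose union is X is essentially finite. -/
open Set

/-! If `X ∈ 𝓛`, every set is small, every open set lies in `𝓛`, and admissibility tested at
`L = X` says that an admissible family is essentially finite. Conversely, `𝓛` is itself an
admissible family covering `X`; if it is essentially finite, `X` is a finite union of members
of `𝓛` and so belongs to `𝓛`. -/

section

variable {X : Type*} {L : Set (Set X)}

lemma univ_mem_compatible (L : Set (Set X)) : univ ∈ compatible L := by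
  intro M hM
  rwa [univ_inter]

lemma smalls_eq_univ_of_univ_mem (hL : univ ∈ L) : smalls L = univ :=
  eq_univ_of_forall fun B => ⟨univ, hL, subset_univ B⟩

lemma compatible_subset_of_smalls_eq_univ (hL : smalls L = univ) : compatible L ⊆ L := by
  intro Y hY
  obtain ⟨M, hM, hYM⟩ : Y ∈ smalls L := hL ▸ mem_univ Y
  simpa [inter_eq_left.mpr hYM] using hY M hM

lemma Admissible.sUnion_eq_of_univ_mem {U : Set (Set X)} (hU : Admissible L U)
    (hL : univ ∈ L) : ∃ F ⊆ U, F.Finite ∧ ⋃₀ U = ⋃₀ F := by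
  obtain ⟨F, hFU, hF, hUF⟩ := hU.2 univ hL
  exact ⟨F, hFU, hF, by simpa using hUF⟩

namespace IsLSS

lemma subset_compatible (h : IsLSS L) : L ⊆ compatible L :=
  fun M hM N hN => (h.2.1 M hM N hN).1

lemma sUnion_mem_of_finite (h : IsLSS L) {F : Set (Set X)} (hF : F.Finite) (hFL : F ⊆ L) :
    ⋃₀ F ∈ L := by
  induction F, hF using Set.Finite.induction_on with
  | empty => simpa using h.1
  | @insert M F _ _ ih =>
    rw [sUnion_insert]
    exact (h.2.1 M (hFL (mem_insert M F)) _ (ih ((subset_insert M F).trans hFL))).2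

lemma admissible_self (h : IsLSS L) : Admissible L L := by
  refine ⟨h.subset_compatible, fun M hM =>
    ⟨{M}, singleton_subset_iff.mpr hM, finite_singleton M, ?_⟩⟩
  rw [h.2.2, sUnion_singleton, univ_inter, inter_self]

lemma univ_mem_of_sUnion_eq (h : IsLSS L) {F : Set (Set X)} (hFL : F ⊆ L) (hF : F.Finite)
    (hLF : ⋃₀ L = ⋃₀ F) : univ ∈ L := by
  rw [← h.2.2, hLF]
  exact h.sUnion_mem_of_finite hF hFL

end IsLSS

end

theorem small_space_tfae {X : Type*} (L : Set (Set X)) (h : IsLSS L) :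
    List.TFAE
      [Set.univ ∈ L,
       smalls L = Set.univ,
       L = compatible L,
       ∀ U : Set (Set X), Admissible L U → ∃ F ⊆ U, F.Finite ∧ ⋃₀ U = ⋃₀ F,
       ∀ U : Set (Set X), Admissible L U → ⋃₀ U = Set.univ →
         ∃ F ⊆ U, F.Finite ∧ ⋃₀ U = ⋃₀ F] := by
  tfae_have 1 → 2 := smalls_eq_univ_of_univ_mem
  tfae_have 2 → 3 := fun hL =>
    h.subset_compatible.antisymm (compatible_subset_of_smalls_eq_univ hL)
  tfae_have 3 → 1 := fun hL => hL ▸ univ_mem_compatible L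
  tfae_have 1 → 4 := fun hL U hU => hU.sUnion_eq_of_univ_mem hL
  tfae_have 4 → 5 := fun h4 U hU _ => h4 U hU
  tfae_have 5 → 1 := fun h5 => by
    obtain ⟨F, hFL, hF, hLF⟩ := h5 L h.admissible_self h.2.2
    exact h.univ_mem_of_sUnion_eq hFL hF hLF
  tfae_finish
end

section
/- Let {(X_i, 𝓛_i)}_{i∈I} be a family of locally small spaces (each X_i a subset of a common ambient set) satisfying the gluing condition (⋆): for all i, j ∈ I, the set X_i ∩ X_j belongs to 𝓛_i° and to 𝓛_j°, and {L ∩ X_j : L ∈ 𝓛_i} = {M ∩ X_i : M ∈ 𝓛_j}. Let X = ⋃_{i∈I} X_i and let 𝓛_X be the smallest ring of subsets of X (family containing ∅ and closed under binary unions and binary intersections) containing ⋃_{i∈I} 𝓛_i. Then: (a) the members of 𝓛_X are exactly the sets of the form L_1 ∪ … ∪ L_k with each L_j belonging to some 𝓛_{i_j}; (b) for each i ∈ I, X_i ∈ 𝓛_X° and 𝓛_i = {L ∩ X_i : L ∈ 𝓛_X} (so each (X_i, 𝓛_i) is an open subspace of (X, 𝓛_X)); (c) the family {X_i}_{i∈I}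 is admissible in (X, 𝓛_X). -/
/-!
The gluing condition (⋆) says exactly that `M ∩ X_i ∈ 𝓛_i` whenever `M ∈ 𝓛_j`. Consequently
`⋃ 𝓛_i` is closed under binary intersections (for `L ∈ 𝓛_i` we have `L ∩ M = L ∩ (M ∩ X_i)`),
so the ring it generates consists of the finite unions of its members. Intersecting such a
finite union with `X_i` gives a finite union of members of `𝓛_i`, hence a member of `𝓛_i`; and
a finite union `L_1 ∪ … ∪ L_k` with `L_m ∈ 𝓛_{i_m}` lies inside `X_{i_1} ∪ … ∪ X_{i_k}`, which
gives admissibility.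
-/

open Set

/-- The smallest ring of sets (containing `∅`, closed under binary unions and
intersections) containing a family `S`. -/
def ringGen {X : Type*} (S : Set (Set X)) : Set (Set X) :=
  ⋂₀ {R | S ⊆ R ∧ ∅ ∈ R ∧ ∀ a ∈ R, ∀ b ∈ R, a ∩ b ∈ R ∧ a ∪ b ∈ R}

def finiteUnions {X : Type*} (S : Set (Set X)) : Set (Set X) :=
  {L | ∃ F : Set (Set X), F.Finite ∧ F ⊆ S ∧ L = ⋃₀ F}

section FiniteUnions

variable {X : Type*} {S T : Set (Set X)}

theorem subset_finiteUnions : S ⊆ finiteUnions S := fun L hL =>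
  ⟨{L}, finite_singleton L, singleton_subset_iff.2 hL, (sUnion_singleton L).symm⟩

theorem empty_mem_finiteUnions : ∅ ∈ finiteUnions S :=
  ⟨∅, finite_empty, empty_subset S, sUnion_empty.symm⟩

theorem supClosed_finiteUnions : SupClosed (finiteUnions S) := by
  rintro _ ⟨F, hF, hFS, rfl⟩ _ ⟨G, hG, hGS, rfl⟩
  exact ⟨F ∪ G, hF.union hG, union_subset hFS hGS, (sUnion_union F G).symm⟩

theorem finiteUnions_subset (hST : S ⊆ T) (hT : SupClosed T) (hT₀ : ∅ ∈ T) :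
    finiteUnions S ⊆ T := by
  rintro _ ⟨F, hF, hFS, rfl⟩
  exact hT.sSup_mem hF hT₀ (hFS.trans hST)

theorem inter_mem_finiteUnions {Y : Set X} (hS : ∀ L ∈ S, L ∩ Y ∈ T) {U : Set X}
    (hU : U ∈ finiteUnions S) : U ∩ Y ∈ finiteUnions T := by
  obtain ⟨F, hF, hFS, rfl⟩ := hU
  refine ⟨(· ∩ Y) '' F, hF.image _, image_subset_iff.2 fun L hL => hS L (hFS hL), ?_⟩
  rw [sUnion_image, sUnion_eq_biUnion, iUnion₂_inter]

/-- Distribute `a ∩ b` first over the members of `a`, then over those of `b`. -/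
theorem infClosed_finiteUnions (hS : InfClosed S) : InfClosed (finiteUnions S) := by
  intro a ha b hb
  have hb' : ∀ L ∈ S, L ∩ b ∈ finiteUnions S := fun L hL => by
    rw [inter_comm]
    exact inter_mem_finiteUnions (fun M hM => hS hM hL) hb
  exact finiteUnions_subset subset_rfl supClosed_finiteUnions empty_mem_finiteUnions
    (inter_mem_finiteUnions hb' ha)

theorem ringGen_eq_finiteUnions (hS : InfClosed S) : ringGen S = finiteUnions S := by
  refine subset_antisymm (sInter_subset_of_mem ?_) ?_
  · exact ⟨subset_finiteUnions, empty_mem_finiteUnions,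
      fun a ha b hb => ⟨infClosed_finiteUnions hS ha hb, supClosed_finiteUnions ha hb⟩⟩
  · rintro L hL R ⟨hSR, hR₀, hR⟩
    exact finiteUnions_subset hSR (fun a ha b hb => (hR a ha b hb).2) hR₀ hL

theorem exists_finite_subset_sUnion_of_mem_finiteUnions {U : Set (Set X)}
    (hSU : S ⊆ smalls U) {M : Set X} (hM : M ∈ finiteUnions S) :
    ∃ F ⊆ U, F.Finite ∧ M ⊆ ⋃₀ F := by
  obtain ⟨F, hF, hFS, rfl⟩ := hM
  choose! g hgU hLg using fun L (hL : L ∈ F) => hSU (hFS hL)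
  refine ⟨g '' F, image_subset_iff.2 hgU, hF.image g, sUnion_subset fun L hL => ?_⟩
  exact (hLg L hL).trans (subset_sUnion_of_mem (mem_image_of_mem g hL))

theorem admissible_of_forall_subset_sUnion {L U : Set (Set X)} (hU : U ⊆ compatible L)
    (hcover : ∀ M ∈ L, ∃ F ⊆ U, F.Finite ∧ M ⊆ ⋃₀ F) : Admissible L U := by
  refine ⟨hU, fun M hM => ?_⟩
  obtain ⟨F, hFU, hF, hMF⟩ := hcover M hM
  refine ⟨F, hFU, hF, ?_⟩
  rw [inter_eq_right.2 (hMF.trans (sUnion_mono hFU)), inter_eq_right.2 hMF]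

end FiniteUnions

theorem inter_mem_of_image_inter_eq {A : Type*} {X Y : Set A} {L M : Set (Set A)}
    (hL : ∀ a ∈ L, a ⊆ X) (hXY : ∀ a ∈ L, (X ∩ Y) ∩ a ∈ L)
    (hLM : (· ∩ Y) '' L = (· ∩ X) '' M) {b : Set A} (hb : b ∈ M) : b ∩ X ∈ L := by
  obtain ⟨a, ha, hab : a ∩ Y = b ∩ X⟩ : b ∩ X ∈ (· ∩ Y) '' L := hLM ▸ mem_image_of_mem _ hb
  rw [← hab, ← inter_eq_right.2 (hL a ha), inter_right_comm]
  exact hXY a ha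

theorem infClosed_iUnion_of_inter_mem {A ι : Type*} {Xs : ι → Set A} {Ls : ι → Set (Set A)}
    (hLs : ∀ i, InfClosed (Ls i)) (hsub : ∀ i, ∀ L ∈ Ls i, L ⊆ Xs i)
    (hcut : ∀ i j, ∀ M ∈ Ls j, M ∩ Xs i ∈ Ls i) : InfClosed (⋃ i, Ls i) := by
  simp only [InfClosed, mem_iUnion]
  rintro L ⟨i, hL⟩ M ⟨j, hM⟩
  refine ⟨i, show L ∩ M ∈ Ls i from ?_⟩
  rw [← inter_eq_left.2 (hsub i L hL), inter_assoc, inter_comm (Xs i)]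
  exact hLs i hL (hcut i j M hM)

theorem admissible_union_properties {A ι : Type*} (Xs : ι → Set A) (Ls : ι → Set (Set A))
    (hls : ∀ i, ∅ ∈ Ls i ∧ (∀ a ∈ Ls i, ∀ b ∈ Ls i, a ∩ b ∈ Ls i ∧ a ∪ b ∈ Ls i) ∧
      ⋃₀ Ls i = Xs i)
    -- (⋆): each X_i ∩ X_j is open in (X_i, 𝓛_i) (and, by symmetry in i and j, in (X_j, 𝓛_j)),
    (hstar1 : ∀ i j, ∀ L ∈ Ls i, (Xs i ∩ Xs j) ∩ L ∈ Ls i)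
    -- and the open subspaces induced by X_i ∩ X_j agree: 𝓛_i ∩₁ X_j = 𝓛_j ∩₁ X_i.
    (hstar2 : ∀ i j, (fun L => L ∩ Xs j) '' Ls i = (fun M => M ∩ Xs i) '' Ls j) :
    -- (a) members of 𝓛_X are exactly the finite unions of members of the 𝓛_i's
    (ringGen (⋃ i, Ls i) =
       {L | ∃ F : Set (Set A), F.Finite ∧ F ⊆ (⋃ i, Ls i) ∧ L = ⋃₀ F}) ∧
    -- (b) each X_i is open in (X, 𝓛_X) and 𝓛_i is the induced family of smops
    (∀ i, Xs i ∈ compatible (ringGen (⋃ j, Ls j)) ∧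
       Ls i = (fun L => L ∩ Xs i) '' ringGen (⋃ j, Ls j)) ∧
    -- (c) the family {X_i}_{i ∈ I} is admissible in (X, 𝓛_X)
    Admissible (ringGen (⋃ i, Ls i)) (Set.range Xs) := by
  have hsub : ∀ i, ∀ L ∈ Ls i, L ⊆ Xs i := fun i L hL => (hls i).2.2 ▸ subset_sUnion_of_mem hL
  have hcut : ∀ i j, ∀ M ∈ Ls j, M ∩ Xs i ∈ Ls i := fun i j _ hM =>
    inter_mem_of_image_inter_eq (hsub i) (hstar1 i j) (hstar2 i j) hM
  have hring : ringGen (⋃ i, Ls i) = finiteUnions (⋃ i, Ls i) :=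
    ringGen_eq_finiteUnions <| infClosed_iUnion_of_inter_mem
      (fun i _ ha _ hb => ((hls i).2.1 _ ha _ hb).1) hsub hcut
  have hmeet : ∀ i, ∀ U ∈ ringGen (⋃ j, Ls j), U ∩ Xs i ∈ Ls i := by
    intro i U hU
    refine finiteUnions_subset subset_rfl (fun _ ha _ hb => ((hls i).2.1 _ ha _ hb).2) (hls i).1
      (inter_mem_finiteUnions (fun L hL => ?_) (hring ▸ hU))
    obtain ⟨j, hL⟩ := mem_iUnion.1 hL
    exact hcut i j L hL
  have hopen : ∀ i, Xs i ∈ compatible (ringGen (⋃ j, Ls j)) := fun i U hU => by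
    rw [inter_comm, hring]
    exact subset_finiteUnions (mem_iUnion.2 ⟨i, hmeet i U hU⟩)
  refine ⟨hring, fun i => ⟨hopen i, subset_antisymm (fun L hL => ?_) ?_⟩,
    admissible_of_forall_subset_sUnion ?_ fun M hM => ?_⟩
  · exact ⟨L, hring ▸ subset_finiteUnions (mem_iUnion.2 ⟨i, hL⟩), inter_eq_left.2 (hsub i L hL)⟩
  · rintro _ ⟨U, hU, rfl⟩
    exact hmeet i U hU
  · rintro _ ⟨i, rfl⟩
    exact hopen i
  · refine exists_finite_subset_sUnion_of_mem_finiteUnions ?_ (hring ▸ hM)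
    exact iUnion_subset fun i L hL => ⟨Xs i, mem_range_self i, hsub i L hL⟩
end

section
/- Let (X, 𝓛) be a locally small space. If 𝓤 is an admissible open family, W ⊆ ⋃𝓤, and W ∩ U ∈ 𝓛° for every U ∈ 𝓤, then W ∈ 𝓛° (the regularity axiom holds for (X, 𝓛°, EF(𝓛°, 𝓛))). -/
open Set

/-
Fix `M ∈ 𝓛`. Admissibility gives a finite `𝓕 ⊆ 𝓤` whose union covers `W ∩ M`, so
`W ∩ M = ⋃_{V ∈ 𝓕} (W ∩ V) ∩ M`: a finite union of members of `𝓛`, hence in `𝓛`.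
-/

theorem Set.eq_biUnion_inter_of_subset_sUnion {X : Type*} {s : Set X} {F : Set (Set X)}
    (hs : s ⊆ ⋃₀ F) : s = ⋃ V ∈ F, s ∩ V :=
  (inter_eq_left.2 hs).symm.trans inf_sSup_eq

namespace IsLSS

variable {X : Type*} {L : Set (Set X)}

theorem supClosed (h : IsLSS L) : SupClosed L :=
  fun a ha b hb => (h.2.1 a ha b hb).2

theorem biUnion_mem {ι : Type*} {F : Set ι} {f : ι → Set X} (h : IsLSS L) (hF : F.Finite)
    (hf : ∀ i ∈ F, f i ∈ L) : ⋃ i ∈ F, f i ∈ L :=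
  h.supClosed.biSup_mem hF h.1 hf

end IsLSS

theorem regularity_axiom {X : Type*} (L : Set (Set X)) (h : IsLSS L)
    (U : Set (Set X)) (hU : Admissible L U)
    (W : Set X) (hW : W ⊆ ⋃₀ U)
    (hWU : ∀ V ∈ U, W ∩ V ∈ compatible L) :
    W ∈ compatible L := by
  intro M hM
  obtain ⟨F, hFU, hF, hUF⟩ := hU.2 M hM
  have hWM : W ∩ M ⊆ ⋃₀ F := fun x hx =>
    (show x ∈ ⋃₀ F ∩ M from hUF ▸ ⟨hW hx.1, hx.2⟩).1
  rw [eq_biUnion_inter_of_subset_sUnion hWM]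
  refine h.biUnion_mem hF fun V hV => ?_
  rw [inter_right_comm]
  exact hWU V (hFU hV) M hM
end

section
/- Let (X, 𝓛) be a locally small space. Call a set V ⊆ X small open (in the induced generalized topological space) if V ∈ 𝓛° and every admissible open family 𝓤 is essentially finite on V, i.e., there is a finite subfamily 𝓤_f ⊆ 𝓤 with (⋃𝓤) ∩ V = (⋃𝓤_f) ∩ V. Then the family of small open sets equals 𝓛. -/
open Set

section LocallySmall

variable {X : Type*} {L : Set (Set X)}

theorem sUnion_mem_of_finite (hempty : ∅ ∈ L) (hunion : ∀ a ∈ L, ∀ b ∈ L, a ∪ b ∈ L)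
    {F : Set (Set X)} (hF : F.Finite) (hFL : F ⊆ L) : ⋃₀ F ∈ L := by
  induction F, hF using Set.Finite.induction_on with
  | empty => simpa using hempty
  | @insert M F _ _ ih =>
    rw [sUnion_insert]
    exact hunion M (hFL (mem_insert M F)) _ (ih fun N hN => hFL (mem_insert_of_mem M hN))

theorem subset_compatible (hinter : ∀ a ∈ L, ∀ b ∈ L, a ∩ b ∈ L) : L ⊆ compatible L :=
  fun M hM N hN => hinter M hM N hN

theorem admissible_self (hinter : ∀ a ∈ L, ∀ b ∈ L, a ∩ b ∈ L) : Admissible L L := by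
  refine ⟨subset_compatible hinter, fun M hM => ⟨{M}, singleton_subset_iff.mpr hM,
    finite_singleton M, ?_⟩⟩
  rw [sUnion_singleton, inter_self, inter_eq_right]
  exact subset_sUnion_of_mem hM

/-- `V` lies inside the finite union `⋃₀ F` of members of `L`, hence `V = V ∩ ⋃₀ F ∈ L`. -/
theorem mem_of_compatible_of_essentiallyFinite (hL : IsLSS L) {V : Set X}
    (hV : V ∈ compatible L) (hfin : ∃ F ⊆ L, F.Finite ∧ (⋃₀ L) ∩ V = (⋃₀ F) ∩ V) : V ∈ L := by
  obtain ⟨hempty, hclosed, hcover⟩ := hL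
  obtain ⟨F, hFL, hF, hFV⟩ := hfin
  have hVF : V = V ∩ ⋃₀ F := by
    rw [inter_comm, ← hFV, hcover, univ_inter]
  rw [hVF]
  exact hV _ (sUnion_mem_of_finite hempty (fun a ha b hb => (hclosed a ha b hb).2) hF hFL)

end LocallySmall

theorem smallOpens_eq_smops {X : Type*} (L : Set (Set X)) (h : IsLSS L) :
    {V | V ∈ compatible L ∧ ∀ U : Set (Set X), Admissible L U →
       ∃ F ⊆ U, F.Finite ∧ (⋃₀ U) ∩ V = (⋃₀ F) ∩ V} = L := by
  have hinter : ∀ a ∈ L, ∀ b ∈ L, a ∩ b ∈ L := fun a ha b hb => (h.2.1 a ha b hb).1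
  ext V
  constructor
  · rintro ⟨hV, hsmall⟩
    exact mem_of_compatible_of_essentiallyFinite h hV (hsmall L (admissible_self hinter))
  · intro hV
    exact ⟨subset_compatible hinter hV, fun U hU => hU.2 V hV⟩
end

section
/- Let (X, 𝓛_X) and (Y, 𝓛_Y) be locally small spaces and f : X → Y a mapping. Then f is bounded and continuous if and only if f(S) ∈ 𝓛_Yˢ for every S ∈ 𝓛_Xˢ and f⁻¹(V) ∈ 𝓛_X° for every V ∈ 𝓛_Y°. -/
open Set

/-- `f` is bounded: `𝓛_X` refines `f⁻¹(𝓛_Y)`. -/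
def BoundedMap {X Y : Type*} (LX : Set (Set X)) (LY : Set (Set Y)) (f : X → Y) : Prop :=
  ∀ L ∈ LX, ∃ M ∈ LY, L ⊆ f ⁻¹' M

/-- `f` is continuous: preimages of smops are open. -/
def ContinuousMap' {X Y : Type*} (LX : Set (Set X)) (LY : Set (Set Y)) (f : X → Y) : Prop :=
  ∀ M ∈ LY, f ⁻¹' M ∈ compatible LX

theorem bounded_continuous_iff {X Y : Type*} (LX : Set (Set X)) (LY : Set (Set Y))
    (hX : IsLSS LX) (hY : IsLSS LY) (f : X → Y) :
    (BoundedMap LX LY f ∧ ContinuousMap' LX LY f) ↔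
      ((∀ S ∈ smalls LX, f '' S ∈ smalls LY) ∧
       (∀ V ∈ compatible LY, f ⁻¹' V ∈ compatible LX)) := by
  constructor
  · rintro ⟨hb, hc⟩
    constructor
    · rintro S ⟨L, hL, hSL⟩
      obtain ⟨M, hM, hLM⟩ := hb L hL
      exact ⟨M, hM, fun y ⟨x, hx, hxy⟩ => hxy ▸ hLM (hSL hx)⟩
    · intro V hV L hL
      obtain ⟨M, hM, hLM⟩ := hb L hL
      have hVM : V ∩ M ∈ LY := hV M hM
      have key : f ⁻¹' V ∩ L = f ⁻¹' (V ∩ M) ∩ L := by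
        ext x
        simp only [Set.mem_inter_iff, Set.mem_preimage]
        exact ⟨fun ⟨h1, h2⟩ => ⟨⟨h1, hLM h2⟩, h2⟩, fun ⟨⟨h1, _⟩, h2⟩ => ⟨h1, h2⟩⟩
      rw [key]
      exact hc (V ∩ M) hVM L hL
  · rintro ⟨hs, ho⟩
    constructor
    · intro L hL
      obtain ⟨M, hM, hIM⟩ := hs L ⟨L, hL, subset_rfl⟩
      exact ⟨M, hM, fun x hx => hIM ⟨x, hx, rfl⟩⟩
    · intro M hM
      exact ho M (fun N hN => (hY.2.1 M hM N hN).1)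
end

section
/- Let (X, 𝓛_X) and (Y, 𝓛_Y) be small locally small spaces (i.e., X ∈ 𝓛_X and Y ∈ 𝓛_Y). Then for a mapping f : X → Y the following conditions are equivalent: (a) f is bounded and continuous; (b) f is continuous; (c) f⁻¹(M) ∈ 𝓛_X for every M ∈ 𝓛_Y. -/
open Set

theorem small_spaces_continuity_tfae {X Y : Type*} (LX : Set (Set X)) (LY : Set (Set Y))
    (hX : IsLSS LX) (hY : IsLSS LY)
    (hXs : Set.univ ∈ LX) (hYs : Set.univ ∈ LY) (f : X → Y) :
    List.TFAE
      [BoundedMap LX LY f ∧ ContinuousMap' LX LY f,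
       ContinuousMap' LX LY f,
       ∀ M ∈ LY, f ⁻¹' M ∈ LX] := by
  tfae_have 1 → 2 := fun h => h.2
  tfae_have 2 → 3 := fun h M hM => by
    have := h M hM Set.univ hXs
    simpa using this
  tfae_have 3 → 1 := fun h => by
    refine ⟨fun L hL => ⟨Set.univ, hYs, fun x _ => trivial⟩, fun M hM N hN => ?_⟩
    exact (hX.2.1 _ (h M hM) _ hN).1
  tfae_finish
end

section
/- For a locally small space (X, 𝓛), the following conditions are equivalent: (a) every admissible subfamily of 𝓛 covering X admits a refinement that is a locally finite subfamily of 𝓛 covering X; (b) there exists a locally finite subfamily of 𝓛 covering X. -/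
open Set

theorem paracompact_iff {X : Type*} (L : Set (Set X)) (h : IsLSS L) :
    (∀ U ⊆ L, ⋃₀ U = Set.univ →
       (∀ M ∈ L, ∃ F ⊆ U, F.Finite ∧ (⋃₀ U) ∩ M = (⋃₀ F) ∩ M) →
       ∃ K ⊆ L, (∀ k ∈ K, ∃ u ∈ U, k ⊆ u) ∧
         (∀ M ∈ L, {k ∈ K | (k ∩ M).Nonempty}.Finite) ∧ ⋃₀ K = Set.univ) ↔
    (∃ K ⊆ L, (∀ M ∈ L, {k ∈ K | (k ∩ M).Nonempty}.Finite) ∧ ⋃₀ K = Set.univ) := by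
  constructor
  · intro h1
    obtain ⟨K, hKL, _, hlf, hcov⟩ := h1 L le_rfl h.2.2
      (fun M hM => ⟨{M}, by simpa using hM, Set.finite_singleton _, by
        simp [h.2.2, Set.sUnion_singleton, Set.inter_self]⟩)
    exact ⟨K, hKL, hlf, hcov⟩
  · rintro ⟨K, hKL, hlf, hcov⟩ U hUL hUcov hadm
    choose F hFU hFfin hFeq using hadm
    refine ⟨{s | ∃ k, ∃ hk : k ∈ K, ∃ u ∈ F k (hKL hk), s = u ∩ k}, ?_, ?_, ?_, ?_⟩
    · rintro s ⟨k, hk, u, hu, rfl⟩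
      exact (h.2.1 u (hUL (hFU k (hKL hk) hu)) k (hKL hk)).1
    · rintro s ⟨k, hk, u, hu, rfl⟩
      exact ⟨u, hFU k (hKL hk) hu, Set.inter_subset_left⟩
    · intro M hM
      have hsub : {s ∈ {s | ∃ k, ∃ hk : k ∈ K, ∃ u ∈ F k (hKL hk), s = u ∩ k} |
          (s ∩ M).Nonempty} ⊆
          ⋃ k ∈ {k ∈ K | (k ∩ M).Nonempty}, (fun u => u ∩ k) '' {u | ∃ hk : k ∈ K, u ∈ F k (hKL hk)} := by
        rintro s ⟨⟨k, hk, u, hu, rfl⟩, hne⟩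
        refine Set.mem_biUnion ⟨hk, ?_⟩ ⟨u, ⟨hk, hu⟩, rfl⟩
        exact hne.mono (by rw [Set.inter_assoc]; exact Set.inter_subset_right)
      refine Set.Finite.subset (Set.Finite.biUnion (hlf M hM) ?_) hsub
      intro k hk
      refine Set.Finite.image _ (Set.Finite.subset (hFfin k (hKL hk.1)) ?_)
      rintro u ⟨_, hu⟩
      exact hu
    · apply Set.eq_univ_of_forall
      intro x
      have hx : x ∈ ⋃₀ K := hcov ▸ Set.mem_univ x
      obtain ⟨k, hk, hxk⟩ := hx
      have : x ∈ (⋃₀ F k (hKL hk)) ∩ k := by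
        rw [← hFeq k (hKL hk)]
        exact ⟨hUcov ▸ Set.mem_univ x, hxk⟩
      obtain ⟨⟨u, hu, hxu⟩, _⟩ := this
      exact ⟨u ∩ k, ⟨k, hk, u, hu, rfl⟩, hxu, hxk⟩
end

section
/- For a locally small space (X, 𝓛), the following conditions are equivalent: (a) every admissible subfamily of 𝓛 covering X admits a countable admissible subfamily still covering X; (b) there exists a countable admissible subfamily of 𝓛 covering X. -/
open Set

theorem lindelof_iff {X : Type*} (L : Set (Set X)) (h : IsLSS L) :
    (∀ U ⊆ L, ⋃₀ U = Set.univ →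
       (∀ M ∈ L, ∃ F ⊆ U, F.Finite ∧ (⋃₀ U) ∩ M = (⋃₀ F) ∩ M) →
       ∃ C ⊆ U, C.Countable ∧ ⋃₀ C = Set.univ ∧
         ∀ M ∈ L, ∃ F ⊆ C, F.Finite ∧ (⋃₀ C) ∩ M = (⋃₀ F) ∩ M) ↔
    (∃ C ⊆ L, C.Countable ∧ ⋃₀ C = Set.univ ∧
       ∀ M ∈ L, ∃ F ⊆ C, F.Finite ∧ (⋃₀ C) ∩ M = (⋃₀ F) ∩ M) := by
  constructor
  · intro hall
    refine hall L (subset_refl L) h.2.2 ?_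
    intro M hM
    refine ⟨{M}, by simpa using hM, Set.finite_singleton M, ?_⟩
    rw [h.2.2, Set.sUnion_singleton]
    simp
  · rintro ⟨C, hCL, hCcount, hCcov, hCadm⟩ U hUL hUcov hUadm
    choose F hFU hFfin hFeq using hUadm
    refine ⟨⋃ M ∈ C, F M (hCL ‹_›), ?_, ?_, ?_, ?_⟩
    · intro N hN
      simp only [Set.mem_iUnion] at hN
      obtain ⟨M, hM, hN⟩ := hN
      exact hFU _ _ hN
    · exact hCcount.biUnion fun M hM => (hFfin M (hCL hM)).countable
    · apply Set.eq_univ_of_forall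
      intro x
      have hx : x ∈ ⋃₀ C := by rw [hCcov]; trivial
      obtain ⟨M, hM, hxM⟩ := hx
      have := hFeq M (hCL hM)
      have hx2 : x ∈ (⋃₀ F M (hCL hM)) ∩ M := by
        rw [← this, hUcov]; exact ⟨trivial, hxM⟩
      obtain ⟨N, hN, hxN⟩ := hx2.1
      exact ⟨N, Set.mem_iUnion₂.mpr ⟨M, hM, hN⟩, hxN⟩
    · intro M hM
      obtain ⟨G, hGC, hGfin, hGeq⟩ := hCadm M hM
      refine ⟨⋃ N ∈ G, F N (hCL (hGC ‹_›)), ?_, ?_, ?_⟩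
      · intro P hP
        simp only [Set.mem_iUnion] at hP ⊢
        obtain ⟨N, hN, hP⟩ := hP
        exact ⟨N, hGC hN, hP⟩
      · exact hGfin.biUnion' fun N hN => hFfin N (hCL (hGC hN))
      · apply Set.Subset.antisymm
        · rintro x ⟨-, hxM⟩
          refine ⟨?_, hxM⟩
          have hxG : x ∈ ⋃₀ G := by
            have : x ∈ (⋃₀ G) ∩ M := by rw [← hGeq, hCcov]; exact ⟨trivial, hxM⟩
            exact this.1
          obtain ⟨N, hN, hxN⟩ := hxG
          have hx2 : x ∈ (⋃₀ F N (hCL (hGC hN))) ∩ N := by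
            rw [← hFeq N (hCL (hGC hN)), hUcov]; exact ⟨trivial, hxN⟩
          obtain ⟨P, hP, hxP⟩ := hx2.1
          exact ⟨P, Set.mem_iUnion₂.mpr ⟨N, hN, hP⟩, hxP⟩
        · rintro x ⟨hx, hxM⟩
          refine ⟨?_, hxM⟩
          obtain ⟨P, hP, hxP⟩ := hx
          simp only [Set.mem_iUnion] at hP
          obtain ⟨N, hN, hP⟩ := hP
          exact ⟨P, Set.mem_iUnion₂.mpr ⟨N, hGC hN, hP⟩, hxP⟩
end

section
/- Every connected paracompact locally small space is Lindelöf: if (X, 𝓛) is a locally small space such that X cannot be written as a disjoint union of two nonempty sets from 𝓛°, and there exists a locally finite subfamily 𝓚 ⊆ 𝓛 covering X, then there exists a countable admissible subfamily of 𝓛 covering X. -/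
/-!
Fix a point `x` and a member `k₀ ∋ x` of the locally finite cover `K`, and let `C` be the
component of `k₀` in the intersection graph of `K`. Local finiteness makes every ball of
this graph finite, so `C` is countable, and it makes the union of any subfamily of `K`
open, with admissibility witnessed by the finitely many members meeting a given `M ∈ L`.
The unions of `C` and of `K \ C` are then disjoint open sets covering `X`, the first one
contains `x`, so by connectedness `C` already covers `X`.
-/

open Set

section

variable {X : Type*} {L K : Set (Set X)}

lemma IsLSS.biUnion_mem_s15 (h : IsLSS L) {ι : Type*} {s : Set ι} (hs : s.Finite)
    {f : ι → Set X} (hf : ∀ i ∈ s, f i ∈ L) : ⋃ i ∈ s, f i ∈ L := by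
  induction s, hs using Set.Finite.induction_on with
  | empty => simpa using h.1
  | @insert a s _ _ ih =>
    rw [biUnion_insert]
    exact (h.2.1 _ (hf a (mem_insert a s)) _ (ih fun i hi => hf i (mem_insert_of_mem a hi))).2

lemma sUnion_inter_eq_sUnion_meeting_inter (U : Set (Set X)) (M : Set X) :
    ⋃₀ U ∩ M = ⋃₀ {k ∈ U | (k ∩ M).Nonempty} ∩ M := by
  ext x
  constructor
  · rintro ⟨⟨k, hkU, hxk⟩, hxM⟩
    exact ⟨⟨k, ⟨hkU, x, hxk, hxM⟩, hxk⟩, hxM⟩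
  · rintro ⟨⟨k, hk, hxk⟩, hxM⟩
    exact ⟨⟨k, hk.1, hxk⟩, hxM⟩

section LocallyFinite

variable (hKlf : ∀ M ∈ L, {k ∈ K | (k ∩ M).Nonempty}.Finite)
include hKlf

lemma exists_finite_sUnion_inter_eq {U : Set (Set X)} (hU : U ⊆ K) {M : Set X} (hM : M ∈ L) :
    ∃ F ⊆ U, F.Finite ∧ ⋃₀ U ∩ M = ⋃₀ F ∩ M :=
  ⟨_, sep_subset U _, (hKlf M hM).subset fun _ hk => ⟨hU hk.1, hk.2⟩,
    sUnion_inter_eq_sUnion_meeting_inter U M⟩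

lemma sUnion_mem_compatible (h : IsLSS L) (hKL : K ⊆ L) {U : Set (Set X)} (hU : U ⊆ K) :
    ⋃₀ U ∈ compatible L := by
  intro M hM
  obtain ⟨F, hFU, hF, hFM⟩ := exists_finite_sUnion_inter_eq hKlf hU hM
  rw [hFM, sUnion_eq_biUnion, iUnion₂_inter]
  exact h.biUnion_mem_s15 hF fun k hk => (h.2.1 k (hKL (hU (hFU hk))) M hM).1

end LocallyFinite

lemma eq_univ_of_compatible
    (hconn : ¬ ∃ U ∈ compatible L, ∃ V ∈ compatible L,
       U.Nonempty ∧ V.Nonempty ∧ U ∩ V = ∅ ∧ U ∪ V = Set.univ)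
    {U V : Set X} (hU : U ∈ compatible L) (hV : V ∈ compatible L) (hUne : U.Nonempty)
    (hUV : U ∩ V = ∅) (hcov : U ∪ V = univ) : U = univ := by
  obtain rfl : V = ∅ :=
    not_nonempty_iff_eq_empty.1 fun hVne => hconn ⟨U, hU, V, hV, hUne, hVne, hUV, hcov⟩
  simpa using hcov

def chainStage (K : Set (Set X)) (k₀ : Set X) : ℕ → Set (Set X)
  | 0 => {k₀}
  | n + 1 => chainStage K k₀ n ∪ {k ∈ K | ∃ s ∈ chainStage K k₀ n, (k ∩ s).Nonempty}

/-- The connected component of `k₀` in the intersection graph of `K`. -/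
def chainComponent (K : Set (Set X)) (k₀ : Set X) : Set (Set X) :=
  ⋃ n, chainStage K k₀ n

section Chain

variable {k₀ : Set X}

lemma self_mem_chainComponent : k₀ ∈ chainComponent K k₀ :=
  mem_iUnion.2 ⟨0, rfl⟩

lemma mem_chainComponent_of_inter_nonempty {k s : Set X} (hk : k ∈ K)
    (hs : s ∈ chainComponent K k₀) (hks : (k ∩ s).Nonempty) : k ∈ chainComponent K k₀ := by
  obtain ⟨n, hn⟩ := mem_iUnion.1 hs
  exact mem_iUnion.2 ⟨n + 1, Or.inr ⟨hk, s, hn, hks⟩⟩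

variable (hk₀ : k₀ ∈ K)
include hk₀

lemma chainStage_subset (n : ℕ) : chainStage K k₀ n ⊆ K := by
  induction n with
  | zero => exact singleton_subset_iff.2 hk₀
  | succ n ih => exact union_subset ih (sep_subset K _)

lemma chainComponent_subset : chainComponent K k₀ ⊆ K :=
  iUnion_subset (chainStage_subset hk₀)

lemma chainStage_finite (hK : ∀ k ∈ K, {j ∈ K | (j ∩ k).Nonempty}.Finite) (n : ℕ) :
    (chainStage K k₀ n).Finite := by
  induction n with
  | zero => exact finite_singleton k₀
  | succ n ih =>
    refine ih.union ((ih.biUnion fun s hs => hK s (chainStage_subset hk₀ n hs)).subset ?_)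
    rintro k ⟨hkK, s, hs, hks⟩
    exact mem_biUnion hs ⟨hkK, hks⟩

lemma chainComponent_countable (hK : ∀ k ∈ K, {j ∈ K | (j ∩ k).Nonempty}.Finite) :
    (chainComponent K k₀).Countable :=
  countable_iUnion fun n => (chainStage_finite hk₀ hK n).countable

end Chain

lemma sUnion_union_sUnion_diff_eq_univ {C : Set (Set X)} (hCK : C ⊆ K) (hKcov : ⋃₀ K = univ) :
    ⋃₀ C ∪ ⋃₀ (K \ C) = univ := by
  rw [← sUnion_union, union_sdiff_cancel hCK, hKcov]

lemma sUnion_inter_sUnion_diff_eq_empty {C : Set (Set X)}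
    (habs : ∀ k ∈ K, ∀ s ∈ C, (k ∩ s).Nonempty → k ∈ C) : ⋃₀ C ∩ ⋃₀ (K \ C) = ∅ := by
  refine eq_empty_of_forall_notMem ?_
  rintro y ⟨⟨s, hsC, hys⟩, ⟨k, ⟨hkK, hkC⟩, hyk⟩⟩
  exact hkC (habs k hkK s hsC ⟨y, hyk, hys⟩)

end

theorem connected_paracompact_lindelof {X : Type*} (L : Set (Set X)) (h : IsLSS L)
    (hconn : ¬ ∃ U ∈ compatible L, ∃ V ∈ compatible L,
       U.Nonempty ∧ V.Nonempty ∧ U ∩ V = ∅ ∧ U ∪ V = Set.univ)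
    (K : Set (Set X)) (hKL : K ⊆ L)
    (hKlf : ∀ M ∈ L, {k ∈ K | (k ∩ M).Nonempty}.Finite)
    (hKcov : ⋃₀ K = Set.univ) :
    ∃ C ⊆ L, C.Countable ∧ ⋃₀ C = Set.univ ∧
      ∀ M ∈ L, ∃ F ⊆ C, F.Finite ∧ (⋃₀ C) ∩ M = (⋃₀ F) ∩ M := by
  rcases isEmpty_or_nonempty X with hX | ⟨⟨x⟩⟩
  · exact ⟨∅, empty_subset L, countable_empty, by simp [univ_eq_empty_iff.2 hX],
      fun M _ => ⟨∅, subset_rfl, finite_empty, rfl⟩⟩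
  obtain ⟨k₀, hk₀, hxk₀⟩ : x ∈ ⋃₀ K := hKcov ▸ mem_univ x
  set C := chainComponent K k₀
  have hCK : C ⊆ K := chainComponent_subset hk₀
  have hCcov : ⋃₀ C = univ :=
    eq_univ_of_compatible hconn (sUnion_mem_compatible hKlf h hKL hCK)
      (sUnion_mem_compatible hKlf h hKL sdiff_subset) ⟨x, k₀, self_mem_chainComponent, hxk₀⟩
      (sUnion_inter_sUnion_diff_eq_empty fun _ hk _ hs hks =>
        mem_chainComponent_of_inter_nonempty hk hs hks)
      (sUnion_union_sUnion_diff_eq_univ hCK hKcov)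
  exact ⟨C, hCK.trans hKL, chainComponent_countable hk₀ fun k hk => hKlf k (hKL hk), hCcov,
    fun M hM => exists_finite_sUnion_inter_eq hKlf hCK hM⟩
end

section
/- Every strongly taut Lindelöf locally small space is paracompact: if (X, 𝓛) is a locally small space such that for every L ∈ 𝓛 the weak closure wcl(L) is small (wcl(L) ∈ 𝓛ˢ) and closed (X \ wcl(L) ∈ 𝓛°), and there exists a countable admissible subfamily of 𝓛 covering X, then there exists a locally finite subfamily of 𝓛 covering X. -/
open Set

/-- The weak closure of `Y`: the closure of `Y` in the topological space
`(X, 𝓛^wo)`, i.e. the complement of the union of all weakly open sets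
disjoint from `Y`. -/
def wcl {X : Type*} (L : Set (Set X)) (Y : Set X) : Set X :=
  (⋃₀ {W | W ∈ weaklyOpens L ∧ W ∩ Y = ∅})ᶜ

lemma subset_wcl {X : Type*} (L : Set (Set X)) (Y : Set X) : Y ⊆ wcl L Y := by
  intro x hx hmem
  obtain ⟨W, ⟨_, hWY⟩, hxW⟩ := hmem
  exact absurd hWY (Nonempty.ne_empty ⟨x, hxW, hx⟩)

lemma wcl_empty {X : Type*} (L : Set (Set X)) (hcov : ⋃₀ L = Set.univ) :
    wcl L (∅ : Set X) = ∅ := by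
  have huniv : (Set.univ : Set X) ∈ {W | W ∈ weaklyOpens L ∧ W ∩ (∅ : Set X) = ∅} :=
    ⟨⟨L, Set.Subset.rfl, hcov.symm⟩, Set.inter_empty _⟩
  have : ⋃₀ {W | W ∈ weaklyOpens L ∧ W ∩ (∅ : Set X) = ∅} = Set.univ :=
    Set.eq_univ_of_univ_subset (Set.subset_sUnion_of_mem huniv)
  rw [wcl, this, Set.compl_univ]

theorem strongly_taut_lindelof_paracompact {X : Type*} (L : Set (Set X)) (h : IsLSS L)
    (htaut : ∀ M ∈ L, wcl L M ∈ smalls L ∧ (wcl L M)ᶜ ∈ compatible L)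
    (C : Set (Set X)) (hCL : C ⊆ L) (hCc : C.Countable) (hCcov : ⋃₀ C = Set.univ)
    (hCadm : ∀ M ∈ L, ∃ F ⊆ C, F.Finite ∧ (⋃₀ C) ∩ M = (⋃₀ F) ∩ M) :
    ∃ K ⊆ L, (∀ M ∈ L, {k ∈ K | (k ∩ M).Nonempty}.Finite) ∧ ⋃₀ K = Set.univ := by
  classical
  obtain ⟨hempty, hpair, hcov⟩ := h
  -- enumerate `C` (padded with `∅`)
  obtain ⟨c, hc⟩ := Set.Countable.exists_eq_range (hCc.insert ∅) (Set.insert_nonempty _ _)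
  have hcL : ∀ n, c n ∈ L := by
    intro n
    have hmem : c n ∈ insert (∅ : Set X) C := hc ▸ Set.mem_range_self n
    rcases Set.mem_insert_iff.1 hmem with h1 | h1
    · rw [h1]; exact hempty
    · exact hCL h1
  -- choose small bounds for weak closures
  have hb : ∀ M ∈ L, ∃ B, B ∈ L ∧ wcl L M ⊆ B := by
    intro M hM
    obtain ⟨B, hB, hsub⟩ := (htaut M hM).1
    exact ⟨B, hB, hsub⟩
  choose! N hNL hNsub using hb
  -- the increasing sequence `E`
  set E : ℕ → Set X := fun n => Nat.rec (c 0) (fun n En => (En ∪ c (n + 1)) ∪ N En) n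
    with hEdef
  have hE0 : E 0 = c 0 := rfl
  have hEsucc : ∀ n, E (n + 1) = (E n ∪ c (n + 1)) ∪ N (E n) := fun n => rfl
  have hEL : ∀ n, E n ∈ L := by
    intro n
    induction n with
    | zero => exact hcL 0
    | succ n ih =>
      rw [hEsucc]
      exact (hpair _ (hpair _ ih _ (hcL (n + 1))).2 _ (hNL _ ih)).2
  have hEmono : ∀ n, E n ⊆ E (n + 1) := by
    intro n
    rw [hEsucc]
    exact Set.subset_union_left.trans Set.subset_union_left
  have hEmono' : ∀ m n, m ≤ n → E m ⊆ E n := by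
    intro m n hmn
    induction hmn with
    | refl => exact Set.Subset.rfl
    | step _ ih => exact ih.trans (hEmono _)
  have hcE : ∀ n, c n ⊆ E n := by
    intro n
    cases n with
    | zero => rw [hE0]
    | succ n =>
      rw [hEsucc]
      exact Set.subset_union_right.trans Set.subset_union_left
  have hwclE : ∀ n, wcl L (E n) ⊆ E (n + 1) := by
    intro n
    refine (hNsub _ (hEL n)).trans ?_
    rw [hEsucc]
    exact Set.subset_union_right
  -- the shifted sequence `P`
  set P : ℕ → Set X := fun n => match n with
    | 0 => ∅
    | 1 => ∅
    | (m + 2) => E m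
    with hPdef
  have hPL : ∀ n, P n ∈ L := by
    intro n
    match n with
    | 0 => exact hempty
    | 1 => exact hempty
    | (m + 2) => exact hEL m
  have hwclP : ∀ m, wcl L (P (m + 1)) ⊆ E m := by
    intro m
    match m with
    | 0 => rw [show P 1 = ∅ from rfl, wcl_empty L hcov]; exact Set.empty_subset _
    | (j + 1) => exact hwclE j
  -- the locally finite cover
  set k : ℕ → Set X := fun n => E (n + 1) ∩ (wcl L (P n))ᶜ with hkdef
  have hkL : ∀ n, k n ∈ L := by
    intro n
    have := (htaut (P n) (hPL n)).2 (E (n + 1)) (hEL (n + 1))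
    simpa [hkdef, Set.inter_comm] using this
  -- every point lies in some `E n`
  have hEcov : ∀ x : X, ∃ n, x ∈ E n := by
    intro x
    have hx : x ∈ ⋃₀ C := hCcov.symm ▸ Set.mem_univ x
    obtain ⟨s, hsC, hxs⟩ := hx
    have : s ∈ Set.range c := hc ▸ Set.mem_insert_of_mem _ hsC
    obtain ⟨n, rfl⟩ := this
    exact ⟨n, hcE n hxs⟩
  -- every point lies in some `k n`
  have hkcov : ∀ x : X, ∃ n, x ∈ k n := by
    intro x
    have hex := hEcov x
    set n0 := Nat.find hex with hn0
    have hxE : x ∈ E n0 := Nat.find_spec hex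
    cases hn : n0 with
    | zero =>
      refine ⟨0, hEmono 0 (hn ▸ hxE), ?_⟩
      rw [show P 0 = ∅ from rfl, wcl_empty L hcov]
      exact Set.notMem_empty x
    | succ m =>
      have hxnot : x ∉ E m := Nat.find_min hex (by omega)
      refine ⟨m + 1, hEmono (m + 1) (hn ▸ hxE), fun hmem => hxnot (hwclP m hmem)⟩
  refine ⟨Set.range k, ?_, ?_, ?_⟩
  · rintro _ ⟨n, rfl⟩; exact hkL n
  · intro M hM
    -- `M` is contained in some `E m`
    obtain ⟨F, hFC, hFfin, hFeq⟩ := hCadm M hM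
    have hMF : M ⊆ ⋃₀ F := by
      intro x hx
      have : x ∈ (⋃₀ C) ∩ M := ⟨hCcov.symm ▸ Set.mem_univ x, hx⟩
      exact (hFeq ▸ this).1
    have hFE : ∀ s ∈ F, ∃ i, s ⊆ E i := by
      intro s hs
      have : s ∈ Set.range c := hc ▸ Set.mem_insert_of_mem _ (hFC hs)
      obtain ⟨i, rfl⟩ := this
      exact ⟨i, hcE i⟩
    choose! idx hidx using hFE
    obtain ⟨m, hm⟩ := (hFfin.image idx).bddAbove
    have hME : M ⊆ E m := by
      intro x hx
      obtain ⟨s, hsF, hxs⟩ := hMF hx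
      exact hEmono' _ _ (hm (Set.mem_image_of_mem idx hsF)) (hidx s hsF hxs)
    -- sets `k n` with `n ≥ m + 2` miss `M`
    have hbig : ∀ n, m + 2 ≤ n → k n ∩ M = ∅ := by
      intro n hn
      obtain ⟨j, hj, rfl⟩ : ∃ j, m ≤ j ∧ n = j + 2 := ⟨n - 2, by omega, by omega⟩
      apply Set.eq_empty_of_forall_notMem
      rintro x ⟨⟨-, hxw⟩, hxM⟩
      have hxj : x ∈ E j := hEmono' m j hj (hME hxM)
      exact hxw (subset_wcl L (E j) hxj)
    apply Set.Finite.subset ((Set.finite_Iio (m + 2)).image k)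
    rintro s ⟨⟨n, rfl⟩, hne⟩
    refine Set.mem_image_of_mem k ?_
    by_contra hge
    rw [Set.mem_Iio, not_lt] at hge
    exact hne.ne_empty (hbig n hge)
  · apply Set.eq_univ_of_forall
    intro x
    obtain ⟨n, hn⟩ := hkcov x
    exact ⟨k n, Set.mem_range_self n, hn⟩
end

section
/- For any locally small space (X, 𝓛), one has (𝓛^swo)° = 𝓛^wo, i.e., the family of sets compatible with the small weakly open sets equals the family of weakly open sets. -/
open Set

theorem compatible_swo_eq_wo {X : Type*} (L : Set (Set X)) (h : IsLSS L) :
    compatible (weaklyOpens L ∩ smalls L) = weaklyOpens L := by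
  obtain ⟨-, hbin, hcov⟩ := h
  ext Y
  constructor
  · intro hY
    -- Y = ⋃_{M ∈ L} (Y ∩ M); each Y ∩ M is weakly open
    have key : ∀ M ∈ L, Y ∩ M ∈ weaklyOpens L := by
      intro M hM
      have : M ∈ weaklyOpens L ∩ smalls L :=
        ⟨⟨{M}, by simpa using hM, by simp⟩, ⟨M, hM, le_refl _⟩⟩
      exact (hY M this).1
    choose U hU hUeq using key
    refine ⟨⋃ M ∈ L, U M ‹_›, ?_, ?_⟩
    · intro s hs
      simp only [mem_iUnion] at hs
      obtain ⟨M, hM, hs⟩ := hs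
      exact hU M hM hs
    · ext x
      simp only [mem_sUnion, mem_iUnion]
      constructor
      · intro hx
        have hxuniv : x ∈ ⋃₀ L := hcov ▸ mem_univ x
        obtain ⟨M, hM, hxM⟩ := hxuniv
        have : x ∈ Y ∩ M := ⟨hx, hxM⟩
        rw [hUeq M hM] at this
        obtain ⟨t, ht, hxt⟩ := this
        exact ⟨t, ⟨M, hM, ht⟩, hxt⟩
      · rintro ⟨t, ⟨M, hM, ht⟩, hxt⟩
        have : x ∈ Y ∩ M := by
          rw [hUeq M hM]; exact ⟨t, ht, hxt⟩
        exact this.1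
  · rintro ⟨U, hU, rfl⟩ M ⟨⟨V, hV, rfl⟩, N, hN, hsub⟩
    constructor
    · refine ⟨{w | ∃ u ∈ U, ∃ v ∈ V, w = u ∩ v}, ?_, ?_⟩
      · rintro w ⟨u, hu, v, hv, rfl⟩
        exact (hbin u (hU hu) v (hV hv)).1
      · ext x
        simp only [mem_inter_iff, mem_sUnion, mem_setOf_eq]
        constructor
        · rintro ⟨⟨u, hu, hxu⟩, v, hv, hxv⟩
          exact ⟨u ∩ v, ⟨u, hu, v, hv, rfl⟩, hxu, hxv⟩
        · rintro ⟨w, ⟨u, hu, v, hv, rfl⟩, hxu, hxv⟩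
          exact ⟨⟨u, hu, hxu⟩, v, hv, hxv⟩
    · exact ⟨N, hN, fun x hx => hsub hx.2⟩
end

section
/- For a locally small space (X, 𝓛), the following conditions are equivalent: (1) 𝓛 = 𝓛^swo; (2) 𝓛° = 𝓛^wo. -/
open Set

theorem partially_topological_iff {X : Type*} (L : Set (Set X)) (h : IsLSS L) :
    L = weaklyOpens L ∩ smalls L ↔ compatible L = weaklyOpens L := by
  obtain ⟨hempty, hbin, hcover⟩ := h
  have hcomp_sub_wo : compatible L ⊆ weaklyOpens L := by
    intro Y hY
    refine ⟨(fun M => Y ∩ M) '' L, ?_, ?_⟩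
    · rintro _ ⟨M, hM, rfl⟩; exact hY M hM
    · ext x
      simp only [mem_sUnion, mem_image]
      constructor
      · intro hx
        have hx' : x ∈ ⋃₀ L := by rw [hcover]; trivial
        obtain ⟨M, hM, hxM⟩ := hx'
        exact ⟨Y ∩ M, ⟨M, hM, rfl⟩, hx, hxM⟩
      · rintro ⟨_, ⟨M, hM, rfl⟩, hx, _⟩; exact hx
  constructor
  · intro hL
    apply Subset.antisymm hcomp_sub_wo
    intro W hW M hM
    obtain ⟨U, hU, rfl⟩ := hW
    rw [hL]
    constructor
    · refine ⟨(fun u => u ∩ M) '' U, ?_, ?_⟩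
      · rintro _ ⟨u, hu, rfl⟩; exact (hbin u (hU hu) M hM).1
      · ext x
        simp only [mem_inter_iff, mem_sUnion, mem_image]
        constructor
        · rintro ⟨⟨u, hu, hxu⟩, hxM⟩
          exact ⟨u ∩ M, ⟨u, hu, rfl⟩, hxu, hxM⟩
        · rintro ⟨_, ⟨u, hu, rfl⟩, hxu, hxM⟩
          exact ⟨⟨u, hu, hxu⟩, hxM⟩
    · exact ⟨M, hM, inter_subset_right⟩
  · intro hcw
    apply Subset.antisymm
    · intro M hM
      exact ⟨⟨{M}, by simpa using hM, by simp⟩, ⟨M, hM, Subset.rfl⟩⟩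
    · rintro W ⟨hWwo, M, hM, hWM⟩
      have hWc : W ∈ compatible L := hcw ▸ hWwo
      have := hWc M hM
      rwa [inter_eq_left.mpr hWM] at this
end

section
/- Let X be a set, τ a topology on X, and 𝓑 ⊆ 𝒫(X) a bornology on X (closed under binary unions and under taking subsets) that covers X and has an open basis, i.e., every B ∈ 𝓑 is contained in some member of τ ∩ 𝓑. Then the bornology generated by τ ∩ 𝓑 equals 𝓑, i.e., {B ⊆ X : there exists V ∈ τ ∩ 𝓑 with B ⊆ V} = 𝓑, and the topology generated by τ ∩ 𝓑 equals τ, i.e., {⋃𝓤 : 𝓤 ⊆ τ ∩ 𝓑} = τ. -/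
open Set

theorem bornology_and_topology_recovered {X : Type*} (τ B : Set (Set X))
    -- τ is a topology on X
    (hτ_univ : Set.univ ∈ τ) (hτ_inter : ∀ a ∈ τ, ∀ b ∈ τ, a ∩ b ∈ τ)
    (hτ_sUnion : ∀ S ⊆ τ, ⋃₀ S ∈ τ)
    -- B is a bornology on X covering X
    (hB_union : ∀ a ∈ B, ∀ b ∈ B, a ∪ b ∈ B)
    (hB_down : ∀ a b : Set X, a ⊆ b → b ∈ B → a ∈ B)
    (hB_cov : ⋃₀ B = Set.univ)
    -- B has an open basis: every member of B lies in some member of τ ∩ B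
    (hbasis : ∀ A ∈ B, ∃ V ∈ τ ∩ B, A ⊆ V) :
    {A | ∃ V ∈ τ ∩ B, A ⊆ V} = B ∧ {W | ∃ S ⊆ τ ∩ B, W = ⋃₀ S} = τ := by
  constructor
  · ext A
    constructor
    · rintro ⟨V, ⟨_, hVB⟩, hAV⟩
      exact hB_down A V hAV hVB
    · exact hbasis A
  · ext W
    constructor
    · rintro ⟨S, hS, rfl⟩
      exact hτ_sUnion S (fun s hs => (hS hs).1)
    · intro hW
      refine ⟨{U | ∃ V ∈ τ ∩ B, U = W ∩ V}, ?_, ?_⟩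
      · rintro U ⟨V, ⟨hVτ, hVB⟩, rfl⟩
        exact ⟨hτ_inter W hW V hVτ, hB_down _ V inter_subset_right hVB⟩
      · ext x
        simp only [mem_sUnion, mem_setOf_eq]
        constructor
        · intro hx
          have hxB : x ∈ ⋃₀ B := by rw [hB_cov]; trivial
          obtain ⟨b, hbB, hxb⟩ := hxB
          obtain ⟨V, hV, hbV⟩ := hbasis b hbB
          exact ⟨W ∩ V, ⟨V, hV, rfl⟩, hx, hbV hxb⟩
        · rintro ⟨t, ⟨V, hV, rfl⟩, hxt, _⟩
          exact hxt
end
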